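/- arXiv:1002.1745 — 5 statements merged into one kernel-verified Lean document; each statement's English description precedes it below -/
import Mathlib

section
/- Let Γ be a countable discrete group and let φ_n : Γ → ℂ be a sequence of positive definite functions such that |1 − φ_n(γ)| → 0 as n → ∞ for every γ ∈ Γ. Assume moreover that for every sequence (m_k) of natural numbers there exists a sequence (n_k) of natural numbers with n_k ≥ m_k for all k, such that for every infinite subset X ⊆ Γ the quantity sup_{x∈X} |1 − φ_{n_k}(x)| does not tend to 0 as k → ∞ (i.e., the functions φ_{n_k} do not converge uniformly to 1 on any infinite subset of Γ). Then there exists a proper conditionally negative definite function ψ : Γ → ℝ; that is, Γ has the Haagerup property. -/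
open scoped ComplexOrder

/-- A function `φ : G → ℂ` is positive definite if for all `g_1, …, g_m ∈ G` and
`c_1, …, c_m ∈ ℂ` the sum `Σ_{i,j} c_i conj(c_j) φ(g_j⁻¹ g_i)` is a nonnegative real number
(equivalently, it is `≥ 0` for the standard partial order on `ℂ`). -/
def IsPositiveDefinite {G : Type*} [Group G] (φ : G → ℂ) : Prop :=
  ∀ (m : ℕ) (g : Fin m → G) (c : Fin m → ℂ),
    0 ≤ ∑ i : Fin m, ∑ j : Fin m, c i * (starRingEnd ℂ) (c j) * φ ((g j)⁻¹ * g i)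

/-- A function `ψ : G → ℝ` is conditionally negative definite if `ψ(e) = 0`,
`ψ(g⁻¹) = ψ(g)`, and `Σ_{i,j} c_i c_j ψ(g_j⁻¹ g_i) ≤ 0` whenever `Σ_i c_i = 0`. -/
def IsCondNegDef {G : Type*} [Group G] (ψ : G → ℝ) : Prop :=
  ψ 1 = 0 ∧ (∀ g : G, ψ g⁻¹ = ψ g) ∧
    ∀ (m : ℕ) (g : Fin m → G) (c : Fin m → ℝ), (∑ i : Fin m, c i) = 0 →
      ∑ i : Fin m, ∑ j : Fin m, c i * c j * ψ ((g j)⁻¹ * g i) ≤ 0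

/-- A real-valued function on `G` is proper if all of its sublevel sets are finite. -/
def IsProper {G : Type*} (ψ : G → ℝ) : Prop :=
  ∀ K : ℝ, {g : G | ψ g ≤ K}.Finite

/-!
Enumerate `Γ` by finite pieces `F k` and use the hypothesis on a fast-growing `m` to get a
subsequence `φ_k := φ (n k)` with `‖1 - φ_k‖ ≤ 4⁻ᵏ` on `F k ∪ {1}`. Then
`ψ γ = ∑ₖ 2ᵏ (Re φ_k 1 - Re φ_k γ)` converges, and it is conditionally negative definite as a sum
of such functions. On a sublevel set `{ψ ≤ K}` every term is at most `K`, so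
`Re φ_k 1 - Re φ_k γ ≤ K 2⁻ᵏ` there, and for positive definite `φ` the inequality
`‖φ 1 - φ γ‖² ≤ 2 φ(1) (φ 1 - Re φ γ)` turns this into uniform convergence `φ_k → 1` on `{ψ ≤ K}`.
By hypothesis that set is therefore finite.
-/

open Filter Topology ComplexConjugate

namespace IsPositiveDefinite

variable {G : Type*} [Group G] {φ : G → ℂ}

theorem map_one_nonneg (hφ : IsPositiveDefinite φ) : 0 ≤ φ 1 := by
  simpa using hφ 1 ![1] ![1]

theorem ofReal_re_map_one (hφ : IsPositiveDefinite φ) : ((φ 1).re : ℂ) = φ 1 :=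
  Complex.ext rfl (Complex.nonneg_iff.1 hφ.map_one_nonneg).2

theorem two_point_nonneg (hφ : IsPositiveDefinite φ) (g : G) (a b : ℂ) :
    0 ≤ (a * conj a + b * conj b) * φ 1 + a * conj b * φ g + b * conj a * φ g⁻¹ := by
  have h := hφ 2 ![g, 1] ![a, b]
  convert h using 1
  simp only [Fin.sum_univ_two, Matrix.cons_val_zero, Matrix.cons_val_one, Matrix.cons_val_fin_one,
    inv_one, one_mul, inv_mul_cancel, mul_one]
  ring

theorem map_inv (hφ : IsPositiveDefinite φ) (g : G) : φ g⁻¹ = conj (φ g) := by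
  have h₁ := Complex.nonneg_iff.1 (hφ.two_point_nonneg g 1 1)
  have h₂ := Complex.nonneg_iff.1 (hφ.two_point_nonneg g 1 Complex.I)
  have him : (φ 1).im = 0 := (Complex.nonneg_iff.1 hφ.map_one_nonneg).2.symm
  apply Complex.ext <;> simp [him] at h₁ h₂ ⊢ <;> linarith

theorem norm_le (hφ : IsPositiveDefinite φ) (g : G) : ‖φ g‖ ≤ (φ 1).re := by
  set z := φ g
  rcases eq_or_ne z 0 with hz | hz
  · simpa [hz] using (Complex.nonneg_iff.1 hφ.map_one_nonneg).1
  -- the witness `(conj z, -‖z‖)` turns `two_point_nonneg` into `0 ≤ 2 ‖z‖² (φ 1 - ‖z‖)`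
  have h := (hφ.two_point_nonneg g (conj z) (-‖z‖)).1
  rw [hφ.map_inv, ← hφ.ofReal_re_map_one] at h
  have key : (conj z * conj (conj z) + -(‖z‖ : ℂ) * conj (-(‖z‖ : ℂ))) * ((φ 1).re : ℂ) +
      conj z * conj (-(‖z‖ : ℂ)) * z + -(‖z‖ : ℂ) * conj (conj z) * conj z =
      ((2 * ‖z‖ ^ 2 * ((φ 1).re - ‖z‖) : ℝ) : ℂ) := by
    simp only [Complex.conj_conj, map_neg, Complex.conj_ofReal]
    push_cast
    linear_combination (((φ 1).re : ℂ) - 2 * ‖z‖) * Complex.conj_mul' z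
  rw [key, Complex.ofReal_re, Complex.zero_re] at h
  exact sub_nonneg.1 (nonneg_of_mul_nonneg_right h (by positivity))

theorem re_le (hφ : IsPositiveDefinite φ) (g : G) : (φ g).re ≤ (φ 1).re :=
  (Complex.re_le_norm _).trans (hφ.norm_le g)

theorem norm_map_one_sub_sq_le (hφ : IsPositiveDefinite φ) (g : G) :
    ‖φ 1 - φ g‖ ^ 2 ≤ 2 * (φ 1).re * ((φ 1).re - (φ g).re) := by
  have h := hφ.norm_le g
  have hA : 0 ≤ (φ 1).re := (norm_nonneg _).trans h
  have hsq := pow_le_pow_left₀ (norm_nonneg _) h 2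
  rw [Complex.sq_norm, Complex.normSq_apply] at hsq
  rw [← hφ.ofReal_re_map_one, Complex.sq_norm, Complex.normSq_apply]
  simp only [Complex.sub_re, Complex.ofReal_re, Complex.sub_im, Complex.ofReal_im]
  nlinarith

theorem sum_sum_mul_re_nonneg (hφ : IsPositiveDefinite φ) (m : ℕ) (g : Fin m → G)
    (c : Fin m → ℝ) : 0 ≤ ∑ i, ∑ j, c i * c j * (φ ((g j)⁻¹ * g i)).re := by
  have h := (Complex.nonneg_iff.1 (hφ m g (fun i => c i))).1
  simpa [Complex.re_sum, mul_assoc] using h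

theorem isCondNegDef_re_sub (hφ : IsPositiveDefinite φ) :
    IsCondNegDef fun g => (φ 1).re - (φ g).re := by
  refine ⟨sub_self _, fun g => by simp only [hφ.map_inv, Complex.conj_re], fun m g c hc => ?_⟩
  simp only [mul_sub, Finset.sum_sub_distrib, ← Finset.sum_mul, ← Finset.mul_sum, hc]
  simpa using hφ.sum_sum_mul_re_nonneg m g c

end IsPositiveDefinite

namespace IsCondNegDef

variable {G : Type*} [Group G]

theorem const_mul {ψ : G → ℝ} (hψ : IsCondNegDef ψ) {a : ℝ} (ha : 0 ≤ a) :
    IsCondNegDef fun g => a * ψ g := by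
  obtain ⟨h₁, hinv, hneg⟩ := hψ
  refine ⟨by simp [h₁], fun g => by simp only [hinv], fun m g c hc => ?_⟩
  have h := mul_nonpos_of_nonneg_of_nonpos ha (hneg m g c hc)
  simpa only [Finset.mul_sum, mul_left_comm a] using h

theorem tsum {ι : Type*} {ψ : ι → G → ℝ} (hψ : ∀ k, IsCondNegDef (ψ k))
    (hs : ∀ g, Summable fun k => ψ k g) : IsCondNegDef fun g => ∑' k, ψ k g := by
  refine ⟨by simp [(hψ _).1], fun g => by simp only [(hψ _).2.1], fun m g c hc => ?_⟩
  have hswap : ∑ i, ∑ j, c i * c j * ∑' k, ψ k ((g j)⁻¹ * g i)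
      = ∑' k, ∑ i, ∑ j, c i * c j * ψ k ((g j)⁻¹ * g i) := by
    rw [Summable.tsum_finsetSum fun i _ => summable_sum fun j _ => (hs _).mul_left _]
    refine Finset.sum_congr rfl fun i _ => ?_
    rw [Summable.tsum_finsetSum fun j _ => (hs _).mul_left _]
    simp only [tsum_mul_left]
  rw [hswap]
  exact tsum_nonpos fun k => (hψ k).2.2 m g c hc

end IsCondNegDef

theorem tendstoUniformlyOn_one_of_re_sub_le {ι G : Type*} [Group G] {l : Filter ι}
    {φ : ι → G → ℂ} (hφ : ∀ i, IsPositiveDefinite (φ i))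
    (h₁ : Tendsto (fun i => φ i 1) l (𝓝 1)) {ε : ι → ℝ} (hε : Tendsto ε l (𝓝 0)) {X : Set G}
    (hX : ∀ i, ∀ x ∈ X, (φ i 1).re - (φ i x).re ≤ ε i) :
    TendstoUniformlyOn φ (fun _ => 1) l X := by
  have hbound : ∀ i, ∀ x ∈ X,
      dist 1 (φ i x) ≤ ‖1 - φ i 1‖ + √(2 * (φ i 1).re * ε i) := by
    intro i x hx
    have hA : 0 ≤ 2 * (φ i 1).re := by linarith [(norm_nonneg _).trans ((hφ i).norm_le 1)]
    have hsq := ((hφ i).norm_map_one_sub_sq_le x).trans (mul_le_mul_of_nonneg_left (hX i x hx) hA)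
    rw [Complex.dist_eq]
    exact (norm_sub_le_norm_sub_add_norm_sub _ _ _).trans
      (add_le_add_right (Real.le_sqrt_of_sq_le hsq) _)
  have hlim : Tendsto (fun i => ‖1 - φ i 1‖ + √(2 * (φ i 1).re * ε i)) l (𝓝 0) := by
    have hre := (Complex.continuous_re.tendsto _).comp h₁
    simpa using (h₁.const_sub 1).norm.add ((hre.const_mul 2).mul hε).sqrt
  rw [Metric.tendstoUniformlyOn_iff]
  intro δ hδ
  filter_upwards [hlim.eventually (gt_mem_nhds hδ)] with i hi x hx
  exact (hbound i x hx).trans_lt hi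

theorem exists_forall_ge_forall_mem_le {α : Type*} {u : ℕ → α → ℝ}
    (hu : ∀ a, Tendsto (u · a) atTop (𝓝 0)) {F : ℕ → Set α} (hF : ∀ k, (F k).Finite)
    {ε : ℕ → ℝ} (hε : ∀ k, 0 < ε k) : ∃ m : ℕ → ℕ, ∀ k, ∀ n ≥ m k, ∀ a ∈ F k, u n a ≤ ε k := by
  have h : ∀ k, ∀ᶠ n in atTop, ∀ a ∈ F k, u n a ≤ ε k := fun k =>
    (eventually_all_finite (hF k)).2 fun a _ => (hu a).eventually_le_const (hε k)
  choose m hm using fun k => eventually_atTop.1 (h k)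
  exact ⟨m, hm⟩

theorem abs_re_sub_re_le_norm_one_sub_add (a b : ℂ) : |a.re - b.re| ≤ ‖1 - a‖ + ‖1 - b‖ :=
  calc |a.re - b.re| = |((1 - b) - (1 - a)).re| := by simp
    _ ≤ ‖(1 - b) - (1 - a)‖ := Complex.abs_re_le_norm _
    _ ≤ ‖1 - a‖ + ‖1 - b‖ := by rw [add_comm]; exact norm_sub_le _ _

section GeomWeightedDefect

variable {G : Type*} [Group G] {φ : ℕ → G → ℂ}

noncomputable def geomWeightedDefect (φ : ℕ → G → ℂ) (g : G) : ℝ :=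
  ∑' k, 2 ^ k * ((φ k 1).re - (φ k g).re)

theorem summable_two_pow_mul_re_sub {g : G}
    (hg : ∀ᶠ k in atTop, ‖1 - φ k 1‖ ≤ (4 : ℝ)⁻¹ ^ k ∧ ‖1 - φ k g‖ ≤ (4 : ℝ)⁻¹ ^ k) :
    Summable fun k => (2 : ℝ) ^ k * ((φ k 1).re - (φ k g).re) := by
  refine .of_norm_bounded_eventually_nat (summable_geometric_two.mul_left 2) ?_
  filter_upwards [hg] with k ⟨h₁, hg⟩
  have hpow : (2 : ℝ) ^ k * (4 : ℝ)⁻¹ ^ k = (1 / 2) ^ k := by rw [← mul_pow]; norm_num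
  rw [norm_mul, Real.norm_eq_abs, Real.norm_eq_abs, abs_of_pos (by positivity)]
  calc 2 ^ k * |(φ k 1).re - (φ k g).re| ≤ 2 ^ k * (‖1 - φ k 1‖ + ‖1 - φ k g‖) := by
        gcongr; exact abs_re_sub_re_le_norm_one_sub_add _ _
    _ ≤ 2 ^ k * (4⁻¹ ^ k + 4⁻¹ ^ k) := by gcongr
    _ = 2 * (1 / 2) ^ k := by rw [← hpow]; ring

theorem isCondNegDef_geomWeightedDefect (hφ : ∀ k, IsPositiveDefinite (φ k))
    (hs : ∀ g, Summable fun k => (2 : ℝ) ^ k * ((φ k 1).re - (φ k g).re)) :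
    IsCondNegDef (geomWeightedDefect φ) :=
  IsCondNegDef.tsum (fun k => (hφ k).isCondNegDef_re_sub.const_mul (by positivity)) hs

theorem tendstoUniformlyOn_setOf_geomWeightedDefect_le (hφ : ∀ k, IsPositiveDefinite (φ k))
    (hs : ∀ g, Summable fun k => (2 : ℝ) ^ k * ((φ k 1).re - (φ k g).re))
    (h₁ : Tendsto (φ · 1) atTop (𝓝 1)) (K : ℝ) :
    TendstoUniformlyOn φ (fun _ => 1) atTop {g | geomWeightedDefect φ g ≤ K} := by
  refine tendstoUniformlyOn_one_of_re_sub_le hφ h₁ (ε := fun k => K / 2 ^ k)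
    (tendsto_const_nhds.div_atTop (tendsto_pow_atTop_atTop_of_one_lt one_lt_two))
    fun k g hg => ?_
  rw [le_div_iff₀ (by positivity), mul_comm]
  exact ((hs g).le_tsum k fun j _ =>
    mul_nonneg (by positivity) (sub_nonneg.2 ((hφ j).re_le g))).trans hg

end GeomWeightedDefect

/-- If `Γ` is a countable discrete group and `φ_n : Γ → ℂ` is a sequence of
positive definite functions with `|1 - φ_n(γ)| → 0` for every `γ`, such that for every sequence
`(m_k)` there is a sequence `(n_k)` with `n_k ≥ m_k` for which the functions `φ_{n_k}` do not
converge uniformly to `1` on any infinite subset of `Γ`, then `Γ` admits a proper conditionally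
negative definite function, i.e. `Γ` has the Haagerup property. -/
theorem haagerup_of_not_uniform
    (Γ : Type*) [Group Γ] [Countable Γ]
    (φ : ℕ → Γ → ℂ)
    (hpd : ∀ n, IsPositiveDefinite (φ n))
    (hconv : ∀ γ : Γ, Filter.Tendsto (fun n => ‖1 - φ n γ‖) Filter.atTop (nhds 0))
    (hnonunif : ∀ m : ℕ → ℕ, ∃ n : ℕ → ℕ, (∀ k, m k ≤ n k) ∧
      ∀ X : Set Γ, X.Infinite →
        ¬ TendstoUniformlyOn (fun k x => φ (n k) x) (fun _ => (1 : ℂ)) Filter.atTop X) :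
    ∃ ψ : Γ → ℝ, IsCondNegDef ψ ∧ IsProper ψ := by
  obtain ⟨f, hf⟩ := Countable.exists_injective_nat Γ
  set F : ℕ → Set Γ := fun k => insert 1 {γ | f γ ≤ k}
  have hF : ∀ k, (F k).Finite := fun k => ((Set.finite_Iic k).preimage hf.injOn).insert 1
  obtain ⟨m, hm⟩ := exists_forall_ge_forall_mem_le hconv hF (ε := fun k => (4 : ℝ)⁻¹ ^ k)
    fun k => by positivity
  obtain ⟨n, hmn, hn⟩ := hnonunif m
  have hclose : ∀ k, ∀ γ ∈ F k, ‖1 - φ (n k) γ‖ ≤ (4 : ℝ)⁻¹ ^ k := fun k => hm k (n k) (hmn k)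
  have hs : ∀ γ, Summable fun k => (2 : ℝ) ^ k * ((φ (n k) 1).re - (φ (n k) γ).re) :=
    fun γ => summable_two_pow_mul_re_sub <| (eventually_ge_atTop (f γ)).mono fun k hk =>
      ⟨hclose k 1 (Set.mem_insert _ _), hclose k γ (Set.mem_insert_of_mem _ hk)⟩
  have h₁ : Tendsto (fun k => φ (n k) 1) atTop (𝓝 1) := by
    rw [tendsto_iff_norm_sub_tendsto_zero]
    refine squeeze_zero (fun _ => norm_nonneg _) (fun k => ?_)
      (tendsto_pow_atTop_nhds_zero_of_lt_one (by norm_num) (by norm_num : (4 : ℝ)⁻¹ < 1))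
    rw [norm_sub_rev]
    exact hclose k 1 (Set.mem_insert _ _)
  have hpd' : ∀ k, IsPositiveDefinite (φ (n k)) := fun k => hpd (n k)
  exact ⟨_, isCondNegDef_geomWeightedDefect hpd' hs, fun K => Set.not_infinite.1 fun hX =>
    hn _ hX (tendstoUniformlyOn_setOf_geomWeightedDefect_le hpd' hs h₁ K)⟩
end

section
/- Let Γ be an infinite countable discrete group with the property that for every orthogonal representation π of Γ on a real Hilbert space and every cocycle b : Γ → H for π, there exists an infinite subset X ⊆ Γ on which b is bounded (this holds in particular whenever Γ does not have the Haagerup property). Let Λ be a group with more than one element, and form the wreath product Λ ≀ Γ = (⊕_Γ Λ) ⋊ Γ. Then for every orthogonal representation π of Λ ≀ Γ on a real Hilbert space and every cocycle b : Λ ≀ Γ → H for π, there exist an infinite subset S ⊆ ⊕_Γ Λ and a constant K ≥ 0 with ‖b(s)‖ ≤ K for all s ∈ S; in particular the restriction of b to the subgroup ⊕_Γ Λ is never proper. -/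
/-- The subgroup of finitely supported functions `χ → Λ` inside the full product group,
i.e. the restricted direct sum `⊕_χ Λ`. -/
def finSuppSubgroup (χ Λ : Type*) [Group Λ] : Subgroup (χ → Λ) where
  carrier := {f : χ → Λ | (Function.mulSupport f).Finite}
  one_mem' := by simp
  mul_mem' := by
    intro f g hf hg
    exact Set.Finite.subset (hf.union hg) (Function.mulSupport_mul f g)
  inv_mem' := by
    intro f hf
    simpa using hf

/-- The coordinate-permutation action of `γ : Γ` on `⊕_χ Λ`, `(γ • f)(x) = f(γ⁻¹ • x)`. -/
def wreathSmul (Γ χ Λ : Type*) [Group Γ] [Group Λ] [MulAction Γ χ] (γ : Γ)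
    (f : finSuppSubgroup χ Λ) : finSuppSubgroup χ Λ :=
  ⟨fun x => f.1 (γ⁻¹ • x), by
    show (Function.mulSupport fun x => f.1 (γ⁻¹ • x)).Finite
    have h : (Function.mulSupport fun x => f.1 (γ⁻¹ • x)) =
        (fun x => γ⁻¹ • x) ⁻¹' Function.mulSupport f.1 := rfl
    rw [h]
    exact Set.Finite.preimage ((MulAction.injective γ⁻¹).injOn) f.2⟩

/-- The action of `Γ` on `⊕_χ Λ` by permuting coordinates, as a homomorphism into the
automorphism group, used to form the generalized wreath product `Λ ≀_χ Γ = (⊕_χ Λ) ⋊ Γ`. -/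
def wreathAut (Γ χ Λ : Type*) [Group Γ] [Group Λ] [MulAction Γ χ] :
    Γ →* MulAut ↥(finSuppSubgroup χ Λ) where
  toFun γ :=
    { toFun := wreathSmul Γ χ Λ γ
      invFun := wreathSmul Γ χ Λ γ⁻¹
      left_inv := by
        intro f
        apply Subtype.ext
        funext x
        simp [wreathSmul]
      right_inv := by
        intro f
        apply Subtype.ext
        funext x
        simp [wreathSmul]
      map_mul' := by intro f g; rfl }
  map_one' := by
    refine MulEquiv.ext fun f => Subtype.ext (funext fun x => ?_)
    simp [wreathSmul]
  map_mul' := by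
    intro γ δ
    refine MulEquiv.ext fun f => Subtype.ext (funext fun x => ?_)
    simp [wreathSmul, mul_smul] <;> rfl

/-- The action of `Γ` on a disjoint union (sigma type) of `Γ`-sets. -/
instance sigmaMulAction {Γ : Type*} [Group Γ] {ι : Type*} {X : ι → Type*}
    [∀ i, MulAction Γ (X i)] : MulAction Γ ((i : ι) × X i) where
  smul γ p := ⟨p.1, γ • p.2⟩
  one_smul := by rintro ⟨i, x⟩; show Sigma.mk i _ = _; rw [one_smul]
  mul_smul := by rintro γ δ ⟨i, x⟩; show Sigma.mk i _ = _; rw [mul_smul]; rfl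

/-- A real Hilbert space `H` together with an orthogonal representation `π` of `G` on `H`
(a homomorphism into the group of linear isometric bijections of `H`) and a cocycle
`b : G → H` for `π`, i.e. `b(gh) = b(g) + π(g)(b(h))`. -/
structure OrthogonalCocycle (G : Type*) [Group G] where
  /-- the underlying real Hilbert space -/
  H : Type*
  [normedAddCommGroup : NormedAddCommGroup H]
  [innerProductSpace : InnerProductSpace ℝ H]
  [completeSpace : CompleteSpace H]
  /-- the orthogonal representation -/
  π : G →* (H ≃ₗᵢ[ℝ] H)
  /-- the cocycle -/
  b : G → H
  cocycle : ∀ g h : G, b (g * h) = b g + π g (b h)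

attribute [instance] OrthogonalCocycle.normedAddCommGroup
  OrthogonalCocycle.innerProductSpace OrthogonalCocycle.completeSpace

/-!
Fix `l ≠ 1` in `Λ` and let `δ_x ∈ ⊕_Γ Λ` take the value `l` at `x` and `1` elsewhere. In `Λ ≀ Γ`
we have `δ_x = x δ_1 x⁻¹`, so the cocycle identity gives `‖b(δ_x)‖ ≤ ‖b(δ_1)‖ + 2‖b(x)‖`: the
cocycle `b` is bounded on `{δ_x | x ∈ X}` as soon as its restriction to `Γ` is bounded on `X`,
and the hypothesis on `Γ` provides an infinite such `X`.

The hypothesis on `Γ` only speaks about Hilbert spaces in one fixed universe. Since `Γ` is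
countable, the restricted cocycle takes values in the separable closed span of its range, which is
isometric to an `ℓ²` space over an index type in any universe.
-/

open Function Set Submodule TopologicalSpace
open scoped lp

universe u v w

theorem Orthonormal.countable_of_separableSpace {𝕜 E ι : Type*} [RCLike 𝕜]
    [NormedAddCommGroup E] [InnerProductSpace 𝕜 E] [SeparableSpace E] {v : ι → E}
    (hv : Orthonormal 𝕜 v) : Countable ι := by
  refine Pairwise.countable_of_isOpen_disjoint (s := fun i => Metric.ball (v i) (1 / 2))
    (fun i j hij => Metric.ball_disjoint_ball ?_) (fun _ => Metric.isOpen_ball)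
    (fun i => ⟨v i, Metric.mem_ball_self (by norm_num)⟩)
  have h : ‖v i - v j‖ ^ 2 = 2 := by
    rw [norm_sub_sq (𝕜 := 𝕜), hv.1 i, hv.1 j, hv.2 hij]
    norm_num
  rw [dist_eq_norm]
  nlinarith [norm_nonneg (v i - v j)]

theorem exists_linearIsometryEquiv_lp_of_separableSpace (𝕜 E : Type*) [RCLike 𝕜]
    [NormedAddCommGroup E] [InnerProductSpace 𝕜 E] [CompleteSpace E] [SeparableSpace E] :
    ∃ ι : Type w, Nonempty (E ≃ₗᵢ[𝕜] ℓ²(ι, 𝕜)) := by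
  obtain ⟨s, b, -⟩ := exists_hilbertBasis 𝕜 E
  have := b.orthonormal.countable_of_separableSpace
  let e := equivShrink.{w} s
  have hv : Orthonormal 𝕜 (b ∘ e.symm) := b.orthonormal.comp _ e.symm.injective
  have hsp : ⊤ ≤ (span 𝕜 (range (b ∘ e.symm))).topologicalClosure := by
    rw [e.symm.surjective.range_comp]
    exact b.dense_span.ge
  exact ⟨_, ⟨(HilbertBasis.mk hv hsp).repr⟩⟩

noncomputable section

namespace OrthogonalCocycle

variable {G : Type*} [Group G] (c : OrthogonalCocycle G)

theorem b_one : c.b 1 = 0 := by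
  simpa using c.cocycle 1 1

theorem norm_b_mul_le (g h : G) : ‖c.b (g * h)‖ ≤ ‖c.b g‖ + ‖c.b h‖ := by
  rw [c.cocycle, ← (c.π g).norm_map (c.b h)]
  exact norm_add_le _ _

theorem norm_b_inv (g : G) : ‖c.b g⁻¹‖ = ‖c.b g‖ := by
  have h : c.π g (c.b g⁻¹) = -c.b g := by
    have := c.cocycle g g⁻¹
    rw [mul_inv_cancel, b_one] at this
    exact eq_neg_of_add_eq_zero_right this.symm
  rw [← (c.π g).norm_map, h, norm_neg]

theorem norm_b_conj_le (g h : G) : ‖c.b (g * h * g⁻¹)‖ ≤ ‖c.b h‖ + 2 * ‖c.b g‖ := by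
  have := c.norm_b_mul_le (g * h) g⁻¹
  have := c.norm_b_mul_le g h
  rw [norm_b_inv] at *
  linarith

def comp {G' : Type*} [Group G'] (f : G' →* G) : OrthogonalCocycle G' where
  H := c.H
  π := c.π.comp f
  b := c.b ∘ f
  cocycle g h := by simp [c.cocycle]

def map {E : Type*} [NormedAddCommGroup E] [InnerProductSpace ℝ E] [CompleteSpace E]
    (e : c.H ≃ₗᵢ[ℝ] E) : OrthogonalCocycle G where
  H := E
  π := MonoidHom.mk' (fun g => (e.symm.trans (c.π g)).trans e) fun g h => by
    ext x
    simp
  b := e ∘ c.b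
  cocycle g h := by simp [c.cocycle]

section Restrict

variable (V : Submodule ℝ c.H) (hV : ∀ g, ∀ x ∈ V, c.π g x ∈ V)

def restrictRep : G →* (V ≃ₗᵢ[ℝ] V) :=
  MonoidHom.mk'
    (fun g =>
      { toFun x := ⟨c.π g x, hV g x x.2⟩
        invFun x := ⟨c.π g⁻¹ x, hV g⁻¹ x x.2⟩
        map_add' x y := Subtype.ext (map_add _ _ _)
        map_smul' r x := Subtype.ext (map_smul _ _ _)
        left_inv x := Subtype.ext (by simp)
        right_inv x := Subtype.ext (by simp)
        norm_map' x := (c.π g).norm_map x })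
    fun g h => by
      ext x
      simp

def restrict [CompleteSpace V] (hb : ∀ g, c.b g ∈ V) : OrthogonalCocycle G where
  H := V
  π := c.restrictRep V hV
  b g := ⟨c.b g, hb g⟩
  cocycle g h := Subtype.ext (c.cocycle g h)

end Restrict

theorem apply_mem_topologicalClosure_span_range_b (g : G) {x : c.H}
    (hx : x ∈ (span ℝ (range c.b)).topologicalClosure) :
    c.π g x ∈ (span ℝ (range c.b)).topologicalClosure := by
  set V := (span ℝ (range c.b)).topologicalClosure
  have hspan : span ℝ (range c.b) ≤ V.comap (c.π g).toLinearEquiv.toLinearMap := by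
    refine span_le.2 ?_
    rintro _ ⟨h, rfl⟩
    have hπb : c.π g (c.b h) = c.b (g * h) - c.b g := by
      rw [c.cocycle]
      abel
    refine le_topologicalClosure _ ?_
    simpa [hπb] using
      sub_mem (subset_span (mem_range_self (g * h))) (subset_span (mem_range_self g))
  exact topologicalClosure_minimal _ hspan
    ((span ℝ (range c.b)).isClosed_topologicalClosure.preimage (c.π g).continuous) hx

theorem exists_norm_b_eq_of_countable {G : Type u} [Group G] [Countable G]
    (c : OrthogonalCocycle.{u, v} G) :
    ∃ c' : OrthogonalCocycle.{u, w} G, ∀ g, ‖c'.b g‖ = ‖c.b g‖ := by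
  set V := (span ℝ (range c.b)).topologicalClosure
  have : CompleteSpace V := Submodule.topologicalClosure.completeSpace _
  have : SeparableSpace V := by
    refine IsSeparable.separableSpace ?_
    rw [topologicalClosure_coe]
    exact (countable_range c.b).isSeparable.span.closure
  obtain ⟨ι, ⟨e⟩⟩ := exists_linearIsometryEquiv_lp_of_separableSpace.{w} ℝ V
  let c' := c.restrict V c.apply_mem_topologicalClosure_span_range_b
    fun g => le_topologicalClosure _ (subset_span (mem_range_self g))
  exact ⟨c'.map e, fun g => e.norm_map (c'.b g)⟩

end OrthogonalCocycle

end

namespace finSuppSubgroup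

variable {χ Λ : Type*} [Group Λ] [DecidableEq χ]

def mulSingle (x : χ) (l : Λ) : finSuppSubgroup χ Λ :=
  ⟨Pi.mulSingle x l, (finite_singleton x).subset Pi.mulSupport_mulSingle_subset⟩

theorem mulSingle_left_injective {l : Λ} (hl : l ≠ 1) :
    Injective fun x : χ => mulSingle x l := by
  intro x y hxy
  by_contra hne
  exact hl <| by
    simpa [mulSingle, Pi.mulSingle_eq_of_ne hne] using congrFun (congrArg Subtype.val hxy) x

end finSuppSubgroup

section Wreath

open finSuppSubgroup SemidirectProduct

variable {Γ χ Λ : Type*} [Group Γ] [Group Λ] [MulAction Γ χ] [DecidableEq χ]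

theorem wreathAut_mulSingle (γ : Γ) (x : χ) (l : Λ) :
    wreathAut Γ χ Λ γ (mulSingle x l) = mulSingle (γ • x) l := by
  ext y
  change (Pi.mulSingle x l : χ → Λ) (γ⁻¹ • y) = (Pi.mulSingle (γ • x) l : χ → Λ) y
  simp [Pi.mulSingle_apply, inv_smul_eq_iff]

theorem OrthogonalCocycle.norm_b_inl_mulSingle_smul_le
    (c : OrthogonalCocycle (finSuppSubgroup χ Λ ⋊[wreathAut Γ χ Λ] Γ)) (γ : Γ) (x : χ) (l : Λ) :
    ‖c.b (inl (mulSingle (γ • x) l))‖ ≤ ‖c.b (inl (mulSingle x l))‖ + 2 * ‖c.b (inr γ)‖ := by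
  rw [← wreathAut_mulSingle, inl_aut]
  simpa only [map_inv] using c.norm_b_conj_le (inr γ) (inl (mulSingle x l))

end Wreath

open finSuppSubgroup SemidirectProduct in
theorem wreath_cocycle_bounded_on_infinite_base_subset_general
    (Γ Λ : Type*) [Group Γ] [Group Λ] [Countable Γ] [Nontrivial Λ]
    (hΓ : ∀ c : OrthogonalCocycle Γ, ∃ X : Set Γ, X.Infinite ∧
      ∃ C : ℝ, ∀ x ∈ X, ‖c.b x‖ ≤ C)
    (c : OrthogonalCocycle (↥(finSuppSubgroup Γ Λ) ⋊[wreathAut Γ Γ Λ] Γ)) :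
    (∃ S : Set ↥(finSuppSubgroup Γ Λ), S.Infinite ∧ ∃ K : ℝ, 0 ≤ K ∧
        ∀ s ∈ S, ‖c.b (SemidirectProduct.inl s)‖ ≤ K) ∧
      ¬ (∀ K : ℝ, 0 ≤ K →
          {s : ↥(finSuppSubgroup Γ Λ) | ‖c.b (SemidirectProduct.inl s)‖ ≤ K}.Finite) := by
  classical
  obtain ⟨l, hl⟩ := exists_ne (1 : Λ)
  obtain ⟨c', hc'⟩ := (c.comp inr).exists_norm_b_eq_of_countable
  obtain ⟨X, hX, C, hC⟩ := hΓ c'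
  set K := ‖c.b (inl (mulSingle 1 l))‖ + 2 * C
  have hbounded : ∀ x ∈ X, ‖c.b (inl (mulSingle x l))‖ ≤ K := by
    intro x hx
    have hconj := c.norm_b_inl_mulSingle_smul_le x 1 l
    have hx : ‖c.b (inr x)‖ ≤ C := hc' x ▸ hC x hx
    rw [smul_eq_mul, mul_one] at hconj
    linarith
  have hS : ∃ S : Set (finSuppSubgroup Γ Λ), S.Infinite ∧ ∃ K : ℝ, 0 ≤ K ∧
      ∀ s ∈ S, ‖c.b (inl s)‖ ≤ K :=
    ⟨(mulSingle · l) '' X, hX.image (mulSingle_left_injective hl).injOn, K,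
      (norm_nonneg _).trans (hbounded _ hX.nonempty.some_mem), forall_mem_image.2 hbounded⟩
  refine ⟨hS, fun hfin => ?_⟩
  obtain ⟨S, hSinf, K, hK, hSK⟩ := hS
  exact hSinf ((hfin K hK).subset hSK)

/-- Let `Γ` be an infinite countable discrete group such that every cocycle
into an orthogonal representation of `Γ` is bounded on some infinite subset of `Γ` (e.g. `Γ`
without the Haagerup property), and let `Λ` be a nontrivial group.  Then for every cocycle
`b` into an orthogonal representation of the wreath product `Λ ≀ Γ = (⊕_Γ Λ) ⋊ Γ` (where `Γ`
acts on `χ = Γ` by left translation), there is an infinite subset `S` of the base group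
`⊕_Γ Λ` on which `b` is bounded; in particular the restriction of `b` to `⊕_Γ Λ` is never
proper. -/
theorem wreath_cocycle_bounded_on_infinite_base_subset
    (Γ Λ : Type*) [Group Γ] [Group Λ] [Countable Γ] [Infinite Γ] [Nontrivial Λ]
    (hΓ : ∀ c : OrthogonalCocycle Γ, ∃ X : Set Γ, X.Infinite ∧
      ∃ C : ℝ, ∀ x ∈ X, ‖c.b x‖ ≤ C)
    (c : OrthogonalCocycle (↥(finSuppSubgroup Γ Λ) ⋊[wreathAut Γ Γ Λ] Γ)) :
    (∃ S : Set ↥(finSuppSubgroup Γ Λ), S.Infinite ∧ ∃ K : ℝ, 0 ≤ K ∧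
        ∀ s ∈ S, ‖c.b (SemidirectProduct.inl s)‖ ≤ K) ∧
      ¬ (∀ K : ℝ, 0 ≤ K →
          {s : ↥(finSuppSubgroup Γ Λ) | ‖c.b (SemidirectProduct.inl s)‖ ≤ K}.Finite) :=
  wreath_cocycle_bounded_on_infinite_base_subset_general Γ Λ hΓ c
end

section
/- Let Γ be a countable discrete group and let φ_k : Γ → ℝ be a sequence of positive definite functions taking values in [0,1] with φ_k(e) = 1 for all k. Assume that Σ_{k=1}^∞ 2^k (1 − φ_k(γ)) < ∞ for every γ ∈ Γ, and that for every infinite subset X ⊆ Γ the quantity sup_{x∈X} (1 − φ_k(x)) does not tend to 0 as k → ∞. Then the function ψ : Γ → ℝ defined by ψ(γ) = Σ_{k=1}^∞ 2^k (1 − φ_k(γ)) is a proper conditionally negative definite function on Γ. -/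
open scoped ComplexOrder

lemma pd_real_sum {G : Type*} [Group G] (φ : G → ℝ)
    (h : IsPositiveDefinite (fun γ => (φ γ : ℂ)))
    (m : ℕ) (g : Fin m → G) (c : Fin m → ℝ) :
    0 ≤ ∑ i : Fin m, ∑ j : Fin m, c i * c j * φ ((g j)⁻¹ * g i) := by
  have := h m g (fun i => (c i : ℂ))
  rw [← Complex.zero_le_real]
  convert this using 1
  push_cast [Complex.conj_ofReal]
  ring_nf

lemma pd_symm {G : Type*} [Group G] (φ : G → ℝ)
    (h : IsPositiveDefinite (fun γ => (φ γ : ℂ))) (g : G) : φ g⁻¹ = φ g := by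
  have := h 2 ![1, g] ![1, Complex.I]
  rw [Complex.le_def] at this
  have him := this.2
  simp [Fin.sum_univ_two, Complex.ext_iff] at him
  linarith


/-- If `φ_k : Γ → [0,1]` is a sequence of positive definite functions with
`φ_k(e) = 1`, such that `Σ_k 2^k (1 - φ_k(γ)) < ∞` for every `γ` and such that `φ_k` does not
converge uniformly to `1` on any infinite subset of `Γ`, then
`ψ(γ) = Σ_k 2^k (1 - φ_k(γ))` is a proper conditionally negative definite function on `Γ`. -/
theorem proper_cnd_of_sum
    (Γ : Type*) [Group Γ] [Countable Γ]
    (φ : ℕ → Γ → ℝ)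
    (hpd : ∀ k, IsPositiveDefinite (fun γ => (φ k γ : ℂ)))
    (hrange : ∀ k, ∀ γ : Γ, φ k γ ∈ Set.Icc (0 : ℝ) 1)
    (hone : ∀ k, φ k 1 = 1)
    (hsum : ∀ γ : Γ, Summable (fun k : ℕ => (2 : ℝ) ^ k * (1 - φ k γ)))
    (hnonunif : ∀ X : Set Γ, X.Infinite →
      ¬ TendstoUniformlyOn (fun k x => φ k x) (fun _ => (1 : ℝ)) Filter.atTop X) :
    IsCondNegDef (fun γ : Γ => ∑' k : ℕ, (2 : ℝ) ^ k * (1 - φ k γ)) ∧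
      IsProper (fun γ : Γ => ∑' k : ℕ, (2 : ℝ) ^ k * (1 - φ k γ)) := by
  have hterm_nonneg : ∀ γ k, (0:ℝ) ≤ (2 : ℝ) ^ k * (1 - φ k γ) := fun γ k =>
    mul_nonneg (by positivity) (by linarith [(hrange k γ).2])
  constructor
  · refine ⟨?_, ?_, ?_⟩
    · simp [hone]
    · intro g
      exact tsum_congr fun k => by rw [pd_symm (φ k) (hpd k) g]
    · intro m g c hc
      have hsummable : ∀ i j : Fin m,
          Summable (fun k : ℕ => c i * c j * ((2:ℝ) ^ k * (1 - φ k ((g j)⁻¹ * g i)))) :=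
        fun i j => (hsum _).mul_left _
      calc ∑ i : Fin m, ∑ j : Fin m, c i * c j * ∑' k : ℕ, (2 : ℝ) ^ k * (1 - φ k ((g j)⁻¹ * g i))
          = ∑' k : ℕ, ∑ i : Fin m, ∑ j : Fin m,
              c i * c j * ((2:ℝ) ^ k * (1 - φ k ((g j)⁻¹ * g i))) := by
            rw [Summable.tsum_finsetSum (fun i _ => summable_sum (fun j _ => hsummable i j))]
            refine Finset.sum_congr rfl fun i _ => ?_
            rw [Summable.tsum_finsetSum (fun j _ => hsummable i j)]
            exact Finset.sum_congr rfl fun j _ => tsum_mul_left.symm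
        _ ≤ 0 := by
            apply tsum_nonpos
            intro k
            have hpdk := pd_real_sum (φ k) (hpd k) m g c
            have : ∑ i : Fin m, ∑ j : Fin m,
                c i * c j * ((2:ℝ) ^ k * (1 - φ k ((g j)⁻¹ * g i)))
                = (2:ℝ)^k * ((∑ i : Fin m, c i) * (∑ j : Fin m, c j)
                  - ∑ i : Fin m, ∑ j : Fin m, c i * c j * φ k ((g j)⁻¹ * g i)) := by
              rw [Finset.sum_mul_sum, ← Finset.sum_sub_distrib, Finset.mul_sum]
              refine Finset.sum_congr rfl fun i _ => ?_
              rw [← Finset.sum_sub_distrib, Finset.mul_sum]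
              exact Finset.sum_congr rfl fun j _ => by ring
            rw [this, hc]
            have h2 : (0:ℝ) ≤ (2:ℝ)^k * ∑ i : Fin m, ∑ j : Fin m,
                c i * c j * φ k ((g j)⁻¹ * g i) := by positivity
            linarith
  · intro K
    by_contra hfin
    have hX : Set.Infinite {g : Γ | (∑' k : ℕ, (2 : ℝ) ^ k * (1 - φ k g)) ≤ K} := hfin
    refine hnonunif _ hX ?_
    rw [Metric.tendstoUniformlyOn_iff]
    intro ε hε
    obtain ⟨x0, hx0⟩ := hX.nonempty
    have hK0 : 0 ≤ K := le_trans (tsum_nonneg (hterm_nonneg x0)) hx0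
    have htend : Filter.Tendsto (fun k : ℕ => K * (1/2:ℝ)^k) Filter.atTop (nhds 0) := by
      have := tendsto_pow_atTop_nhds_zero_of_lt_one (by norm_num : (0:ℝ) ≤ 1/2)
        (by norm_num : (1/2:ℝ) < 1)
      simpa using this.const_mul K
    filter_upwards [htend.eventually (gt_mem_nhds hε)] with k hk x hx
    have hle : (2:ℝ)^k * (1 - φ k x) ≤ K :=
      le_trans (Summable.le_tsum (hsum x) k (fun j _ => hterm_nonneg x j)) hx
    have h2k : (0:ℝ) < (2:ℝ)^k := by positivity
    have hb : 1 - φ k x ≤ K * (1/2:ℝ)^k := by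
      rw [one_div, inv_pow, ← div_eq_mul_inv]
      exact (le_div_iff₀' h2k).2 hle
    have hnn : 0 ≤ 1 - φ k x := by linarith [(hrange k x).2]
    rw [Real.dist_eq, abs_of_nonneg hnn]
    linarith
end

section
/- Let G be a countable discrete group which is the union of an increasing sequence of subgroups G_1 ≤ G_2 ≤ ⋯ ≤ G, and let Λ ≤ G be a subgroup. If for every N the pair (G_N, Λ ∩ G_N) has the Haagerup property from below, then the pair (G, Λ) has the Haagerup property from below. (The witnessing positive definite functions on G are obtained by extending positive definite functions on the subgroups G_N by zero off G_N.) -/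
open scoped ComplexOrder

/-- `f` is C0 on a subset `S` if for every `ε > 0` the set of elements of `S` where
`|f| ≥ ε` is finite. -/
def IsC0On {G : Type*} (f : G → ℂ) (S : Set G) : Prop :=
  ∀ ε : ℝ, 0 < ε → {g ∈ S | ε ≤ ‖f g‖}.Finite

/-- A group `G` has the Haagerup property if there is a sequence of C0 positive definite
functions on `G` converging pointwise to `1`. -/
def HasHaagerup (G : Type*) [Group G] : Prop :=
  ∃ φ : ℕ → G → ℂ, (∀ n, IsPositiveDefinite (φ n)) ∧ (∀ n, IsC0On (φ n) Set.univ) ∧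
    ∀ g : G, Filter.Tendsto (fun n => φ n g) Filter.atTop (nhds 1)

/-- The pair `(G, Λ)` has the Haagerup property from below if there is a sequence of positive
definite functions `ψ_n` on `G` with `|1 - ψ_n(g)| → 0` for every `g ∈ G`, each of which is C0
on `Λ`. -/
def HaagerupFromBelow {G : Type*} [Group G] (Λ : Subgroup G) : Prop :=
  ∃ ψ : ℕ → G → ℂ, (∀ n, IsPositiveDefinite (ψ n)) ∧
    (∀ g : G, Filter.Tendsto (fun n => ‖1 - ψ n g‖) Filter.atTop (nhds 0)) ∧
    ∀ n, IsC0On (ψ n) (Λ : Set G)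

/-!
Enumerate `G = {g₀, g₁, …}`. The finitely many elements `g₀, …, gₙ` all lie in one subgroup
`G_N`, and the Haagerup property from below of `(G_N, Λ ∩ G_N)` provides a positive definite
function on `G_N` that is `1/(n+1)`-close to `1` at these points and C0 on `Λ ∩ G_N`. Extended by
zero it stays positive definite on `G`, because the matrix `(ψ(g_j⁻¹ g_i))` becomes block diagonal
along the cosets of `G_N` and each block is a positive matrix of the original function; it is C0
on `Λ` since it vanishes off `G_N`. These functions form the required sequence.
-/

open Finset Filter

section PositiveDefinite

variable {G : Type*} [Group G]

theorem IsPositiveDefinite.sum_finset_nonneg {φ : G → ℂ} (hφ : IsPositiveDefinite φ)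
    {ι : Type*} (s : Finset ι) (g : ι → G) (c : ι → ℂ) :
    0 ≤ ∑ i ∈ s, ∑ j ∈ s, c i * (starRingEnd ℂ) (c j) * φ ((g j)⁻¹ * g i) := by
  have hre : ∀ F : ι → ℂ, ∑ i ∈ s, F i = ∑ a, F (s.equivFin.symm a) := fun F => by
    rw [← sum_coe_sort, ← s.equivFin.symm.sum_comp]
  rw [hre, sum_congr rfl fun a _ => hre _]
  exact hφ s.card (fun a => g (s.equivFin.symm a)) (fun a => c (s.equivFin.symm a))

theorem Finset.sum_sum_eq_sum_blocks {ι β M : Type*} [Fintype ι] [DecidableEq β]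
    [AddCommMonoid M] (k : ι → β) (t : ι → ι → M) (ht : ∀ i j, k i ≠ k j → t i j = 0) :
    ∑ i, ∑ j, t i j = ∑ q ∈ univ.image k, ∑ i with k i = q, ∑ j with k j = q, t i j := by
  rw [← sum_fiberwise_of_maps_to (g := k) fun i _ => mem_image_of_mem k (mem_univ i)]
  refine sum_congr rfl fun q _ => sum_congr rfl fun i hi => ?_
  rw [sum_filter]
  refine sum_congr rfl fun j _ => ?_
  split_ifs with hj
  · rfl
  · exact ht i j fun hij => hj ((mem_filter.mp hi).2 ▸ hij.symm)

theorem IsPositiveDefinite.extend_subgroup {H : Subgroup G} {φ : H → ℂ}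
    (hφ : IsPositiveDefinite φ) : IsPositiveDefinite (Function.extend ((↑) : H → G) φ 0) := by
  classical
  intro m g c
  let k : Fin m → G ⧸ H := fun i => g i
  -- Writing `g i = (coset representative) * r i` with `r i ∈ H` turns every entry of a
  -- diagonal block into an entry of the positive matrix `φ((r j)⁻¹ r i)`.
  let r : Fin m → H := fun i =>
    ⟨(k i).out⁻¹ * g i, QuotientGroup.eq.mp (QuotientGroup.out_eq' (k i))⟩
  have hblock : ∀ i j, k i = k j →
      Function.extend ((↑) : H → G) φ 0 ((g j)⁻¹ * g i) = φ ((r j)⁻¹ * r i) := by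
    intro i j hij
    have hr : (g j)⁻¹ * g i = (((r j)⁻¹ * r i : H) : G) := by
      simp only [r, hij, Subgroup.coe_mul, Subgroup.coe_inv]
      group
    rw [hr, Subtype.val_injective.extend_apply]
  have hoff : ∀ i j, k i ≠ k j → Function.extend ((↑) : H → G) φ 0 ((g j)⁻¹ * g i) = 0 := by
    intro i j hij
    refine Function.extend_apply' _ _ _ ?_
    rintro ⟨a, ha⟩
    exact hij (QuotientGroup.eq.mpr (ha ▸ a.2)).symm
  rw [sum_sum_eq_sum_blocks k _ fun i j hij => by rw [hoff i j hij, mul_zero]]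
  refine sum_nonneg fun q _ => ?_
  calc 0 ≤ ∑ i with k i = q, ∑ j with k j = q, c i * (starRingEnd ℂ) (c j) * φ ((r j)⁻¹ * r i) :=
        hφ.sum_finset_nonneg _ r c
    _ = _ := by
        refine sum_congr rfl fun i hi => sum_congr rfl fun j hj => ?_
        rw [hblock i j ((mem_filter.mp hi).2.trans (mem_filter.mp hj).2.symm)]

end PositiveDefinite

theorem IsC0On.extend_subgroup {G : Type*} [Group G] {H : Subgroup G} {S : Set G} {φ : H → ℂ}
    (hφ : IsC0On φ (H.subtype ⁻¹' S)) : IsC0On (Function.extend ((↑) : H → G) φ 0) S := by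
  intro ε hε
  refine ((hφ ε hε).image Subtype.val).subset ?_
  rintro g ⟨hgS, hgε⟩
  by_cases hg : g ∈ H
  · refine ⟨⟨g, hg⟩, ⟨hgS, ?_⟩, rfl⟩
    rwa [← Subtype.val_injective.extend_apply φ 0 ⟨g, hg⟩]
  · rw [Function.extend_apply' _ _ _ fun ⟨a, ha⟩ => hg (ha ▸ a.2)] at hgε
    simp only [Pi.zero_apply, norm_zero] at hgε
    exact absurd hgε (not_le.mpr hε)

theorem haagerupFromBelow_of_forall_finset {G : Type*} [Group G] [Countable G] {Λ : Subgroup G}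
    (h : ∀ (F : Finset G) (ε : ℝ), 0 < ε →
      ∃ ψ : G → ℂ, IsPositiveDefinite ψ ∧ IsC0On ψ Λ ∧ ∀ g ∈ F, ‖1 - ψ g‖ < ε) :
    HaagerupFromBelow Λ := by
  classical
  obtain ⟨f, hf⟩ := exists_surjective_nat G
  choose ψ hpd hc0 happrox using
    fun n : ℕ => h ((range (n + 1)).image f) (1 / (n + 1)) (by positivity)
  refine ⟨ψ, hpd, fun g => ?_, hc0⟩
  obtain ⟨k, rfl⟩ := hf g
  refine squeeze_zero' (Eventually.of_forall fun n => norm_nonneg _) ?_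
    tendsto_one_div_add_atTop_nhds_zero_nat
  filter_upwards [eventually_ge_atTop k] with n hn
  exact (happrox n (f k) (mem_image_of_mem f (mem_range.mpr (Nat.lt_succ_of_le hn)))).le

theorem exists_isPositiveDefinite_approx_of_monotone {G : Type*} [Group G] {Gn : ℕ → Subgroup G}
    (hmono : Monotone Gn) (hunion : ∀ g : G, ∃ N, g ∈ Gn N) {Λ : Subgroup G}
    (h : ∀ N, HaagerupFromBelow (Λ.subgroupOf (Gn N))) (F : Finset G) (ε : ℝ) (hε : 0 < ε) :
    ∃ ψ : G → ℂ, IsPositiveDefinite ψ ∧ IsC0On ψ Λ ∧ ∀ g ∈ F, ‖1 - ψ g‖ < ε := by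
  choose Ng hNg using hunion
  have hF : ∀ g ∈ F, g ∈ Gn (F.sup Ng) := fun g hg => hmono (le_sup hg) (hNg g)
  obtain ⟨φ, hpd, htend, hc0⟩ := h (F.sup Ng)
  have hclose : ∀ᶠ n in atTop, ∀ g : F, ‖1 - φ n ⟨g, hF g g.2⟩‖ < ε :=
    eventually_all.mpr fun g => (htend ⟨g, hF g g.2⟩).eventually_lt_const hε
  obtain ⟨n, hn⟩ := hclose.exists
  have hc0' : IsC0On (φ n) ((Gn (F.sup Ng)).subtype ⁻¹' Λ) := by
    simpa only [Subgroup.coe_subgroupOf] using hc0 n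
  refine ⟨_, (hpd n).extend_subgroup, hc0'.extend_subgroup, fun g hg => ?_⟩
  rw [Subtype.val_injective.extend_apply (φ n) 0 ⟨g, hF g hg⟩]
  exact hn ⟨g, hg⟩

/-- If a countable discrete group `G` is the union of an increasing sequence
of subgroups `G_1 ≤ G_2 ≤ ⋯` and `Λ ≤ G` is a subgroup such that each pair `(G_N, Λ ∩ G_N)`
has the Haagerup property from below, then the pair `(G, Λ)` has the Haagerup property from
below. -/
theorem haagerupFromBelow_of_increasing_union
    (G : Type*) [Group G] [Countable G]
    (Gn : ℕ → Subgroup G) (hmono : Monotone Gn)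
    (hunion : ∀ g : G, ∃ N, g ∈ Gn N)
    (Λ : Subgroup G)
    (h : ∀ N, HaagerupFromBelow (Λ.subgroupOf (Gn N))) :
    HaagerupFromBelow Λ :=
  haagerupFromBelow_of_forall_finset (exists_isPositiveDefinite_approx_of_monotone hmono hunion h)
end

section
/- Let n ≥ 3 be an odd integer and p a prime. Let A_1, …, A_k ∈ SL_n(ℤ) and let w be an element of the free group F_{k+1} on generators x_0, x_1, …, x_k. For a ring R and elements g, B_1, …, B_k ∈ SL_n(R), write w(g, B_1, …, B_k) for the image of w under the homomorphism F_{k+1} → SL_n(R) sending x_0 ↦ g and x_i ↦ B_i for 1 ≤ i ≤ k. If the closed set C = {g ∈ SL_n(ℤ_p) : w(g, A_1, …, A_k) = 1} (where the A_i are viewed in SL_n(ℤ_p) via the ring map ℤ → ℤ_p) has nonempty interior in SL_n(ℤ_p), then w(B, A_1, …, A_k) = 1 for every B ∈ SL_n(ℂ) (where the A_i are viewed in SL_n(ℂ) via the ring map ℤ → ℂ). -/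
open Matrix

/-- The topology on `SL_n(ℤ_p)` induced from the (product) topology on matrices over the
`p`-adic integers. -/
noncomputable instance specialLinearGroupPadicTopology (n : ℕ) (p : ℕ) [Fact p.Prime] :
    TopologicalSpace (SpecialLinearGroup (Fin n) ℤ_[p]) :=
  TopologicalSpace.induced (fun g => (g : Matrix (Fin n) (Fin n) ℤ_[p])) inferInstance

/-!
Fix `g` in the interior of `C` and a ring embedding `φ : ℤ_p → ℂ`. Over a field every element
of `SL_n` is a product of transvections, so `B * φ(g)⁻¹ = τ(c)` for a product `τ(t)` of
transvections in fixed positions with coefficients `t`. The element `w(τ(X) g, A)` of `SL_n` over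
the polynomial ring `ℤ_p[X]` is trivial at every point of a box with infinite sides around `0`
(there `τ(t) g` lies in `C`), so it is `1` as a matrix of polynomials. Specialising `X ↦ c` along
`φ` gives `w(B, A) = 1`.
-/

namespace Matrix.SpecialLinearGroup

variable {ι : Type*} [Fintype ι] [DecidableEq ι]

lemma transvection_mulVec {R : Type*} [CommRing R] {i j : ι} (hij : i ≠ j) (b : R)
    (v : ι → R) :
    (transvection hij b : Matrix ι ι R) *ᵥ v = Function.update v i (v i + b * v j) := by
  ext k
  rcases eq_or_ne k i with rfl | hk
  · simp [transvection_coe, add_mulVec, single_mulVec]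
  · simp [transvection_coe, add_mulVec, single_mulVec, hk]

lemma diag2n_decompose {F : Type*} [Field F] {i j : ι} (hij : i ≠ j) (a : F) (ha : a ≠ 0) :
    diag2n hij a ha = transvection hij a * transvection hij.symm (-a⁻¹) * transvection hij a *
      transvection hij (-1) * transvection hij.symm 1 * transvection hij (-1) := by
  refine Subtype.ext (ext_iff_mulVec.2 fun v => funext fun k => ?_)
  simp only [coe_mul, ← mulVec_mulVec, transvection_mulVec, diag2n_coe, mulVec_diagonal]
  rcases eq_or_ne k i with rfl | hki
  · simp [hij, hij.symm]
    field_simp; ring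
  rcases eq_or_ne k j with rfl | hkj
  · simp [hij, hij.symm]
    field_simp; ring
  · simp [hki, hkj, Function.update_apply]

theorem exists_list_transvectionStruct_prod_eq {F : Type*} [Field F]
    (M : SpecialLinearGroup ι F) :
    ∃ L : List (TransvectionStruct ι F),
      (L.map TransvectionStruct.toSpecialLinearGroup).prod = M := by
  cases subsingleton_or_nontrivial ι
  · exact ⟨[], Subsingleton.elim _ _⟩
  refine diagonal_transvection_induction' (fun M => ∃ L : List (TransvectionStruct ι F),
      (L.map TransvectionStruct.toSpecialLinearGroup).prod = M) M (fun i j hij a ha => ?_)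
    (fun i j hij a => ⟨[⟨i, j, hij, a⟩], by simp⟩) ?_
  · refine ⟨[⟨i, j, hij, a⟩, ⟨j, i, hij.symm, -a⁻¹⟩, ⟨i, j, hij, a⟩, ⟨i, j, hij, -1⟩,
      ⟨j, i, hij.symm, 1⟩, ⟨i, j, hij, -1⟩], ?_⟩
    simp [diag2n_decompose, mul_assoc]
  · rintro _ _ ⟨L, rfl⟩ ⟨L', rfl⟩
    exact ⟨L ++ L', by simp⟩

variable {K R S : Type*} [CommRing R] [CommRing S]

lemma map_transvection (f : R →+* S) {i j : ι} (hij : i ≠ j) (b : R) :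
    map f (transvection hij b) = transvection hij (f b) :=
  Subtype.ext <| by simp [transvection_coe, Matrix.map_add, map_single]

lemma map_map {T : Type*} [CommRing T] (f : R →+* S) (g : S →+* T)
    (M : SpecialLinearGroup ι R) : map g (map f M) = map (g.comp f) M := by
  ext; simp

/-- Only the positions of the transvections in `L` are used; the coefficients are `t`. -/
def transvectionProd (L : List (TransvectionStruct ι K)) (t : Fin L.length → R) :
    SpecialLinearGroup ι R :=
  (List.ofFn fun l => transvection (L.get l).hij (t l)).prod

lemma transvectionProd_eq_prod_toSpecialLinearGroup [CommRing K]
    (L : List (TransvectionStruct ι K)) :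
    transvectionProd L (fun l => (L.get l).c) =
      (L.map TransvectionStruct.toSpecialLinearGroup).prod := by
  rw [transvectionProd, ← List.ofFn_getElem_eq_map]
  rfl

lemma transvectionProd_zero (L : List (TransvectionStruct ι K)) :
    transvectionProd L (0 : Fin L.length → R) = 1 := by
  simp [transvectionProd]

lemma map_transvectionProd (f : R →+* S) (L : List (TransvectionStruct ι K))
    (t : Fin L.length → R) : map f (transvectionProd L t) = transvectionProd L (f ∘ t) := by
  simp [transvectionProd, map_list_prod, List.map_ofFn, Function.comp_def, map_transvection]

lemma continuous_coe_transvectionProd [TopologicalSpace R] [IsTopologicalRing R]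
    (L : List (TransvectionStruct ι K)) :
    Continuous fun t : Fin L.length → R => (transvectionProd L t : Matrix ι ι R) := by
  simp only [transvectionProd, ← coeMonoidHom_apply, map_list_prod, List.ofFn_eq_map,
    List.map_map]
  refine continuous_list_prod (M := Matrix ι ι R) _ fun l _ => ?_
  simp only [Function.comp_apply, coeMonoidHom_apply, transvection_coe]
  refine continuous_const.add (continuous_matrix fun k k' => ?_)
  simp only [single_apply]
  split_ifs
  · exact _root_.continuous_apply l
  · exact continuous_const

lemma map_lift_cons_intCast {k : ℕ} (f : R →+* S) (g : SpecialLinearGroup ι R)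
    (A : Fin k → SpecialLinearGroup ι ℤ) (w : FreeGroup (Fin (k + 1))) :
    map f (FreeGroup.lift (Fin.cons g fun i => map (Int.castRingHom R) (A i)) w) =
      FreeGroup.lift (Fin.cons (map f g) fun i => map (Int.castRingHom S) (A i)) w := by
  refine FreeGroup.lift_unique ((map f).comp (FreeGroup.lift _)) fun i => ?_
  cases i using Fin.cases with
  | zero => simp
  | succ i =>
    simp [map_map, RingHom.ext_int (f.comp (Int.castRingHom R)) (Int.castRingHom S)]

theorem eq_one_of_forall_mem_pi_map_eval_eq_one [IsDomain R] {σ : Type*}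
    {M : SpecialLinearGroup ι (MvPolynomial σ R)} (s : σ → Set R) (hs : ∀ i, (s i).Infinite)
    (h : ∀ x ∈ Set.univ.pi s, map (MvPolynomial.eval x) M = 1) : M = 1 := by
  refine Subtype.ext <| Matrix.ext fun k l => ?_
  refine MvPolynomial.funext_set s hs fun x hx => ?_
  simpa [one_apply, apply_ite] using congr(($(h x hx) : Matrix ι ι R) k l)

end Matrix.SpecialLinearGroup

open Filter Topology

theorem exists_infinite_pi_subset_of_mem_nhds {ι : Type*} {X : ι → Type*}
    [∀ i, TopologicalSpace (X i)] [∀ i, T1Space (X i)] {x : ∀ i, X i} [∀ i, (𝓝[≠] x i).NeBot]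
    {V : Set (∀ i, X i)} (hV : V ∈ 𝓝 x) :
    ∃ s : ∀ i, Set (X i), (∀ i, (s i).Infinite) ∧ Set.univ.pi s ⊆ V := by
  rw [nhds_pi, Filter.mem_pi'] at hV
  obtain ⟨I, s, hs, hsV⟩ := hV
  exact ⟨s, fun i => infinite_of_mem_nhds (x i) (hs i), fun y hy => hsV fun i _ => hy i trivial⟩

namespace PadicInt

variable {p : ℕ} [hp : Fact p.Prime]

instance nhdsNE_neBot (x : ℤ_[p]) : (𝓝[≠] x).NeBot := by
  refine mem_closure_iff_nhdsWithin_neBot.1 (mem_closure_of_tendsto (b := atTop)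
    (f := fun k : ℕ => x + (p : ℤ_[p]) ^ k) ?_ (Eventually.of_forall fun k => ?_))
  · simpa using tendsto_const_nhds.add (tendsto_pow_atTop_nhds_zero_of_norm_lt_one
      (norm_p.trans_lt (inv_lt_one_of_one_lt₀ (mod_cast hp.out.one_lt))))
  · simpa using pow_ne_zero k (Nat.cast_ne_zero.2 hp.out.ne_zero : (p : ℤ_[p]) ≠ 0)

open SpecialLinearGroup in
theorem exists_infinite_pi_transvectionProd_mul_mem {n : ℕ} {K : Type*}
    {g : SpecialLinearGroup (Fin n) ℤ_[p]} {U : Set (SpecialLinearGroup (Fin n) ℤ_[p])}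
    (hU : U ∈ 𝓝 g) (L : List (TransvectionStruct (Fin n) K)) :
    ∃ s : Fin L.length → Set ℤ_[p], (∀ l, (s l).Infinite) ∧
      ∀ t ∈ Set.univ.pi s, transvectionProd L t * g ∈ U := by
  have hcont : Continuous fun t : Fin L.length → ℤ_[p] => transvectionProd L t * g :=
    continuous_induced_rng.2 ((continuous_coe_transvectionProd L).mul continuous_const)
  have h0 : transvectionProd L (0 : Fin L.length → ℤ_[p]) * g = g := by
    rw [transvectionProd_zero, one_mul]
  exact exists_infinite_pi_subset_of_mem_nhds (hcont.continuousAt.preimage_mem_nhds (h0 ▸ hU))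

open Cardinal in
theorem _root_.Padic.mk_eq_continuum : #ℚ_[p] = 𝔠 := by
  refine le_antisymm ?_ (continuum_le_cardinal_of_nontriviallyNormedField ℚ_[p])
  calc #ℚ_[p] ≤ #(CauSeq ℚ (padicNorm p)) := mk_quotient_le
    _ ≤ #(ℕ → ℚ) := mk_subtype_le _
    _ = 𝔠 := by rw [← power_def, Cardinal.mkRat, mk_nat, aleph0_power_aleph0]

/-- An algebraic closure of `ℚ_p` is algebraically closed of characteristic zero and has
cardinality `𝔠`, hence is isomorphic to `ℂ`. -/
theorem nonempty_ringHom_complex : Nonempty (ℤ_[p] →+* ℂ) := by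
  open Cardinal in
  let K := AlgebraicClosure ℚ_[p]
  have hK : #K = 𝔠 := by
    refine le_antisymm ?_
      (Padic.mk_eq_continuum (p := p) ▸ mk_le_of_injective (algebraMap ℚ_[p] K).injective)
    refine (Algebra.IsAlgebraic.cardinalMk_le_max ℚ_[p] K).trans ?_
    rw [Padic.mk_eq_continuum]
    exact max_le le_rfl aleph0_le_continuum
  have : CharZero K := charZero_of_injective_algebraMap (algebraMap ℚ_[p] K).injective
  obtain ⟨e⟩ := IsAlgClosed.ringEquiv_of_equiv_of_charZero (K := K) (L := ℂ)
    (hK ▸ aleph0_lt_continuum) (Cardinal.eq.1 (hK.trans mk_complex.symm))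
  exact ⟨(e.toRingHom.comp (algebraMap ℚ_[p] K)).comp Coe.ringHom⟩

end PadicInt

theorem word_trivial_on_SL_complex_of_interior_nonempty_general
    (n : ℕ) (p : ℕ) [Fact p.Prime]
    (k : ℕ) (A : Fin k → SpecialLinearGroup (Fin n) ℤ)
    (w : FreeGroup (Fin (k + 1)))
    (hC : (interior {g : SpecialLinearGroup (Fin n) ℤ_[p] |
        FreeGroup.lift (Fin.cons g fun i =>
          SpecialLinearGroup.map (Int.castRingHom ℤ_[p]) (A i)) w = 1}).Nonempty) :
    ∀ B : SpecialLinearGroup (Fin n) ℂ,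
      FreeGroup.lift (Fin.cons B fun i =>
        SpecialLinearGroup.map (Int.castRingHom ℂ) (A i)) w = 1 := by
  open SpecialLinearGroup MvPolynomial in
  intro B
  obtain ⟨φ⟩ := PadicInt.nonempty_ringHom_complex (p := p)
  obtain ⟨g, hg⟩ := hC
  obtain ⟨L, hL⟩ := exists_list_transvectionStruct_prod_eq (B * (SpecialLinearGroup.map φ g)⁻¹)
  obtain ⟨s, hs, hsC⟩ :=
    PadicInt.exists_infinite_pi_transvectionProd_mul_mem (mem_interior_iff_mem_nhds.1 hg) L
  have hgeneric : FreeGroup.lift (Fin.cons (transvectionProd L X * SpecialLinearGroup.map C g)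
      fun i => SpecialLinearGroup.map (Int.castRingHom _) (A i)) w = 1 := by
    refine eq_one_of_forall_mem_pi_map_eval_eq_one s hs fun x hx => ?_
    have hCg : SpecialLinearGroup.map (eval x) (SpecialLinearGroup.map C g) = g := by ext; simp
    have hX : eval x ∘ X = x := funext fun l => eval_X l
    rw [map_lift_cons_intCast, map_mul, map_transvectionProd, hX, hCg]
    exact hsC x hx
  have := congr(SpecialLinearGroup.map (eval₂Hom φ fun l => (L.get l).c) $hgeneric)
  simp only [map_lift_cons_intCast, map_one, map_mul, map_transvectionProd, Function.comp_def,
    eval₂Hom_X', SpecialLinearGroup.map_map, eval₂Hom_comp_C] at this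
  rwa [transvectionProd_eq_prod_toSpecialLinearGroup, hL, inv_mul_cancel_right] at this

/-- Let `n ≥ 3` be odd, `p` a prime, `A_1, …, A_k ∈ SL_n(ℤ)` and
`w ∈ F_{k+1}` a word.  If the closed set
`C = {g ∈ SL_n(ℤ_p) : w(g, A_1, …, A_k) = 1}` has nonempty interior in `SL_n(ℤ_p)`, then
`w(B, A_1, …, A_k) = 1` for every `B ∈ SL_n(ℂ)`.  (Words are evaluated via the universal
property of the free group, with the first generator sent to `g` resp. `B`, and the `A_i`
transported along the canonical ring maps `ℤ → ℤ_p` and `ℤ → ℂ`.) -/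
theorem word_trivial_on_SL_complex_of_interior_nonempty
    (n : ℕ) (hn : 3 ≤ n) (hodd : Odd n) (p : ℕ) [Fact p.Prime]
    (k : ℕ) (A : Fin k → SpecialLinearGroup (Fin n) ℤ)
    (w : FreeGroup (Fin (k + 1)))
    (hC : (interior {g : SpecialLinearGroup (Fin n) ℤ_[p] |
        FreeGroup.lift (Fin.cons g fun i =>
          SpecialLinearGroup.map (Int.castRingHom ℤ_[p]) (A i)) w = 1}).Nonempty) :
    ∀ B : SpecialLinearGroup (Fin n) ℂ,
      FreeGroup.lift (Fin.cons B fun i =>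
        SpecialLinearGroup.map (Int.castRingHom ℂ) (A i)) w = 1 :=
  word_trivial_on_SL_complex_of_interior_nonempty_general n p k A w hC
end
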